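/- arXiv:1401.2648 — 2 statements merged into one kernel-verified Lean document; each statement's English description precedes it below -/
import Mathlib

section
/- Let n : ℕ and let R be a finite list of words in n generators, and let G be the finitely presented group PresentedGroup S, where S ⊆ FreeGroup (Fin n) is the set of elements determined by R. Then the predicate on pairs (X, Y) of lists of words asserting that Subgroup.closure of the set of elements of G represented by the words in X equals Subgroup.closure of the set of elements of G represented by the words in Y satisfies REPred. -/
/-!
The image in `G` of a word `w` lies in the subgroup generated by the images of a list `L` of words
iff, in the free group, `w` lies in the subgroup generated by `L` and all conjugates of relators,
i.e. iff `w` is freely equal to a product of words of `L`, conjugates of relators, and their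
inverses. Such a product is a finite certificate, checked by free reduction, a primitive recursive
test. Equality of the two subgroups is mutual inclusion, so it holds iff a pair of certificates
exists: the predicate is the projection of a primitive recursive relation, hence r.e.
-/

/-- The set of relators in the free group determined by a list of words. -/
def relsOf {α : Type} (R : List (List (α × Bool))) : Set (FreeGroup α) :=
  {x | ∃ r ∈ R, x = FreeGroup.mk r}

/-- The element of the presented group represented by a word. -/
def wordElt {α : Type} (R : List (List (α × Bool))) (w : List (α × Bool)) :
    PresentedGroup (relsOf R) :=
  PresentedGroup.mk (relsOf R) (FreeGroup.mk w)

open Primrec Encodable in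
theorem REPred.exists_of_primrecRel {α β : Type*} [Primcodable α] [Primcodable β]
    {Q : α → β → Prop} (hQ : PrimrecRel Q) : REPred fun a => ∃ b, Q a b := by
  classical
  have hsearch : Primrec₂ fun a k =>
      (decode (α := β) k).bind fun b => if Q a b then some b else none :=
    option_bind (Primrec.decode.comp snd) (Primrec.ite (hQ.comp (fst.comp fst) snd)
      (option_some.comp snd) (const none)).to₂
  refine (Partrec.rfindOpt hsearch.to_comp).dom_re.of_eq fun a => ?_
  simp only [Nat.rfindOpt_dom, Option.mem_def, Option.bind_eq_some_iff,
    Option.ite_none_right_eq_some, Option.some.injEq]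
  constructor
  · rintro ⟨_, _, _, _, hb, -⟩
    exact ⟨_, hb⟩
  · rintro ⟨b, hb⟩
    exact ⟨encode b, b, b, encodek b, hb, rfl⟩

theorem List.forall_mem_exists_iff {α β : Type*} {P : α → β → Prop} {X : List α} :
    (∀ u ∈ X, ∃ e, P u e) ↔ ∃ E : List β, ∀ u ∈ X, ∃ e ∈ E, P u e := by
  constructor
  · intro h
    choose f hf using h
    exact ⟨X.attach.map fun u => f u.1 u.2,
      fun u hu => ⟨f u hu, mem_map.2 ⟨⟨u, hu⟩, mem_attach _ _, rfl⟩, hf u hu⟩⟩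
  · rintro ⟨E, hE⟩ u hu
    obtain ⟨e, -, he⟩ := hE u hu
    exact ⟨e, he⟩

theorem Subgroup.mem_closure_iff_exists_list_prod_map {G ι : Type*} [Group G] {S : Set G}
    (f : ι → G) (hf : ∀ i, f i ∈ closure S)
    (hS : ∀ x ∈ S, x ∈ Set.range f ∧ x⁻¹ ∈ Set.range f) {g : G} :
    g ∈ closure S ↔ ∃ l : List ι, (l.map f).prod = g := by
  constructor
  · intro hg
    rw [← mem_toSubmonoid, closure_toSubmonoid] at hg
    obtain ⟨l, hl, rfl⟩ := Submonoid.exists_list_of_mem_closure hg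
    have hrange : ∀ x ∈ l, x ∈ Set.range f := by
      intro x hx
      rcases hl x hx with hx | hx
      · exact (hS x hx).1
      · simpa using (hS _ hx).2
    obtain ⟨l', rfl⟩ : l ∈ Set.range (List.map f) := by
      rw [Set.range_list_map]
      exact hrange
    exact ⟨l', rfl⟩
  · rintro ⟨l, rfl⟩
    exact list_prod_mem (by simpa using fun i _ => hf i)

theorem PresentedGroup.mk_mem_closure_image_iff {α : Type*} {rels T : Set (FreeGroup α)}
    {g : FreeGroup α} :
    mk rels g ∈ Subgroup.closure (mk rels '' T) ↔
      g ∈ Subgroup.closure (T ∪ Group.conjugatesOfSet rels) := by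
  have hker : (mk rels).ker = Subgroup.normalClosure rels := by
    ext
    exact mk_eq_one_iff
  rw [← MonoidHom.map_closure, ← Subgroup.mem_comap, Subgroup.comap_map_eq, hker,
    Subgroup.closure_union, Subgroup.normalClosure]

namespace FreeGroup

theorem mk_flatMap {α β : Type*} (e : List β) (g : β → List (α × Bool)) :
    mk (e.flatMap g) = (e.map (mk ∘ g)).prod := by
  induction e with
  | nil => rfl
  | cons x e ih => simp [← mul_mk, ih]

theorem primrec_invRev {α : Type*} [Primcodable α] :
    Primrec (invRev : List (α × Bool) → List (α × Bool)) :=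
  Primrec.list_reverse.comp (Primrec.list_map Primrec.id
    (Primrec.pair (Primrec.fst.comp Primrec.snd)
      (Primrec.not.comp (Primrec.snd.comp Primrec.snd))).to₂)

variable {α : Type*} [DecidableEq α]

-- A letter cancels exactly when the reduced word of the tail starts with its inverse letter.
theorem reduce_eq_foldr (L : List (α × Bool)) :
    reduce L = L.foldr (fun x w => if w.head? = some (x.1, !x.2) then w.tail else x :: w) [] := by
  induction L with
  | nil => rfl
  | cons x L ih =>
    rw [List.foldr_cons, ← ih, reduce.cons]
    rcases reduce L with _ | ⟨⟨c, d⟩, w⟩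
    · rfl
    · obtain ⟨a, b⟩ := x
      cases b <;> cases d <;> simp [eq_comm]

open Primrec in
theorem primrec_reduce [Primcodable α] :
    Primrec (reduce : List (α × Bool) → List (α × Bool)) := by
  refine (list_foldr
    (h := fun _ p => if p.2.head? = some (p.1.1, !p.1.2) then p.2.tail else p.1 :: p.2)
    Primrec.id (const []) ?_).of_eq fun L => (reduce_eq_foldr L).symm
  exact (Primrec.ite (Primrec.eq.comp (list_head?.comp (snd.comp snd))
    (option_some.comp
      (pair (fst.comp (fst.comp snd)) (Primrec.not.comp (snd.comp (fst.comp snd))))))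
    (list_tail.comp (snd.comp snd)) (list_cons.comp (fst.comp snd) (snd.comp snd))).to₂

end FreeGroup

open FreeGroup

section Certificate

variable {α : Type}

def signedWord (b : Bool) (w : List (α × Bool)) : List (α × Bool) :=
  cond b w (invRev w)

theorem mk_signedWord (b : Bool) (w : List (α × Bool)) :
    mk (signedWord b w) = cond b (mk w) (mk w)⁻¹ := by
  cases b <;> simp [signedWord, inv_mk]

theorem mk_signedWord_getD_mem {H : Subgroup (FreeGroup α)} {L : List (List (α × Bool))}
    (hL : ∀ v ∈ L, mk v ∈ H) (b : Bool) (i : ℕ) :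
    mk (signedWord b (L.getD i [])) ∈ H := by
  have hi : mk (L.getD i []) ∈ H := by
    rcases lt_or_ge i L.length with hi | hi
    · rw [List.getD_eq_getElem _ _ hi]
      exact hL _ (List.getElem_mem hi)
    · rw [List.getD_eq_default _ _ hi]
      exact H.one_mem
  cases b
  · simpa [mk_signedWord] using H.inv_mem hi
  · simpa [mk_signedWord] using hi

/- `.inl (i, b)` stands for the `i`-th word of a list `L` of generators, `.inr ((i, b), c)` for
the conjugate by `c` of the `i`-th relator, each inverted when `b = false` (see `factorWord`); an
index out of range stands for the empty word. -/
abbrev Factor (α : Type) := (ℕ × Bool) ⊕ (ℕ × Bool) × List (α × Bool)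

variable (R : List (List (α × Bool)))

def factorWord (L : List (List (α × Bool))) : Factor α → List (α × Bool)
  | .inl (i, b) => signedWord b (L.getD i [])
  | .inr ((i, b), c) => c ++ signedWord b (R.getD i []) ++ invRev c

def liftedGenerators (L : List (List (α × Bool))) : Set (FreeGroup α) :=
  {x | ∃ v ∈ L, x = mk v} ∪ Group.conjugatesOfSet (relsOf R)

theorem mk_factorWord_mem_closure (L : List (List (α × Bool))) (f : Factor α) :
    mk (factorWord R L f) ∈ Subgroup.closure (liftedGenerators R L) := by
  rcases f with ⟨i, b⟩ | ⟨⟨i, b⟩, c⟩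
  · exact mk_signedWord_getD_mem
      (fun v hv => Subgroup.subset_closure (Or.inl ⟨v, hv, rfl⟩)) b i
  · have hrel : mk (signedWord b (R.getD i [])) ∈ Subgroup.normalClosure (relsOf R) :=
      mk_signedWord_getD_mem
        (fun r hr => Subgroup.subset_normalClosure (show mk r ∈ relsOf R from ⟨r, hr, rfl⟩))
        b i
    have hconj := (Subgroup.normalClosure_normal (s := relsOf R)).conj_mem _ hrel (mk c)
    rw [inv_mk, mul_mk, mul_mk] at hconj
    exact Subgroup.closure_mono Set.subset_union_right hconj

theorem exists_mk_factorWord_eq (L : List (List (α × Bool))) {x : FreeGroup α}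
    (hx : x ∈ liftedGenerators R L) (b : Bool) :
    ∃ f, mk (factorWord R L f) = cond b x x⁻¹ := by
  classical
  rcases hx with ⟨v, hv, rfl⟩ | hx
  · obtain ⟨i, hi, rfl⟩ := List.mem_iff_getElem.1 hv
    exact ⟨.inl (i, b), by rw [factorWord, List.getD_eq_getElem _ _ hi, mk_signedWord]⟩
  · obtain ⟨_, ⟨r, hr, rfl⟩, hconj⟩ := Group.mem_conjugatesOfSet_iff.1 hx
    obtain ⟨c, rfl⟩ := isConj_iff.1 hconj
    obtain ⟨i, hi, rfl⟩ := List.mem_iff_getElem.1 hr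
    refine ⟨.inr ((i, b), c.toWord), ?_⟩
    rw [factorWord, List.getD_eq_getElem _ _ hi, ← mul_mk, ← mul_mk, ← inv_mk, mk_signedWord,
      mk_toWord]
    cases b <;> simp [mul_assoc]

theorem mk_mem_closure_liftedGenerators_iff (L : List (List (α × Bool))) (w : List (α × Bool)) :
    mk w ∈ Subgroup.closure (liftedGenerators R L) ↔
      ∃ e : List (Factor α), mk (e.flatMap (factorWord R L)) = mk w := by
  simp only [Subgroup.mem_closure_iff_exists_list_prod_map (mk ∘ factorWord R L)
    (mk_factorWord_mem_closure R L)
    (fun x hx => ⟨exists_mk_factorWord_eq R L hx true, exists_mk_factorWord_eq R L hx false⟩),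
    mk_flatMap]

variable [DecidableEq α]

theorem wordElt_mem_closure_iff (L : List (List (α × Bool))) (w : List (α × Bool)) :
    wordElt R w ∈ Subgroup.closure {x | ∃ v ∈ L, x = wordElt R v} ↔
      ∃ e : List (Factor α), reduce (e.flatMap (factorWord R L)) = reduce w := by
  have himage : {x | ∃ v ∈ L, x = wordElt R v} =
      PresentedGroup.mk (relsOf R) '' {x | ∃ v ∈ L, x = mk v} := by
    ext
    simp [wordElt, eq_comm]
  rw [himage, wordElt, PresentedGroup.mk_mem_closure_image_iff, ← liftedGenerators,
    mk_mem_closure_liftedGenerators_iff]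
  exact exists_congr fun _ => ⟨reduce.sound, reduce.exact⟩

def IsMembershipCertificate (L X : List (List (α × Bool))) (E : List (List (Factor α))) : Prop :=
  ∀ u ∈ X, ∃ e ∈ E, reduce (e.flatMap (factorWord R L)) = reduce u

theorem closure_wordElt_le_iff_exists_certificate (L X : List (List (α × Bool))) :
    Subgroup.closure {x | ∃ u ∈ X, x = wordElt R u} ≤
        Subgroup.closure {x | ∃ v ∈ L, x = wordElt R v} ↔
      ∃ E, IsMembershipCertificate R L X E := by
  calc _ ↔ ∀ u ∈ X, wordElt R u ∈ Subgroup.closure {x | ∃ v ∈ L, x = wordElt R v} := by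
        rw [Subgroup.closure_le]
        exact ⟨fun h u hu => h ⟨u, hu, rfl⟩, fun h _ ⟨u, hu, hx⟩ => hx ▸ h u hu⟩
    _ ↔ _ := by
        simp only [wordElt_mem_closure_iff]
        exact List.forall_mem_exists_iff

end Certificate

section Computability

open Primrec

variable {α : Type} [Primcodable α] (R : List (List (α × Bool)))

theorem primrec_factorWord : Primrec₂ (factorWord R) := by
  have hsigned : Primrec₂ (signedWord : Bool → List (α × Bool) → List (α × Bool)) :=
    (Primrec.cond fst snd (primrec_invRev.comp snd)).to₂
  refine (sumCasesOn (f := Prod.snd)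
    (g := fun p (ib : ℕ × Bool) => signedWord ib.2 (p.1.getD ib.1 []))
    (h := fun _ (q : (ℕ × Bool) × List (α × Bool)) =>
      q.2 ++ signedWord q.1.2 (R.getD q.1.1 []) ++ invRev q.2) snd
    (hsigned.comp (snd.comp snd) ((list_getD []).comp (fst.comp fst) (fst.comp snd))).to₂
    (list_append.comp (list_append.comp (snd.comp snd) (hsigned.comp (snd.comp (fst.comp snd))
      ((list_getD []).comp (const R) (fst.comp (fst.comp snd))))) (primrec_invRev.comp
        (snd.comp snd))).to₂).of_eq ?_
  rintro ⟨L, ⟨i, b⟩ | ⟨⟨i, b⟩, c⟩⟩ <;> rfl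

variable [DecidableEq α]

theorem primrecRel_isMembershipCertificate :
    PrimrecRel fun (p : List (List (α × Bool)) × List (List (α × Bool))) E =>
      IsMembershipCertificate R p.1 p.2 E := by
  have hfactor : PrimrecRel fun (e : List (Factor α))
      (q : List (List (α × Bool)) × List (α × Bool)) =>
      reduce (e.flatMap (factorWord R q.1)) = reduce q.2 :=
    Primrec.eq.comp (primrec_reduce.comp (list_flatMap fst
      ((primrec_factorWord R).comp (fst.comp (snd.comp fst)) snd).to₂))
      (primrec_reduce.comp (snd.comp snd))
  have hword : PrimrecRel fun (u : List (α × Bool))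
      (r : List (List (Factor α)) × List (List (α × Bool))) =>
      ∃ e ∈ r.1, reduce (e.flatMap (factorWord R r.2)) = reduce u :=
    hfactor.exists_mem_list.comp (fst.comp snd) (pair (snd.comp snd) fst)
  exact hword.forall_mem_list.comp (snd.comp fst) (pair snd (fst.comp fst))

end Computability

/-- Equality of the subgroups generated by two finite lists of words is recursively
enumerable. -/
theorem same_subgroup_re (n : ℕ) (R : List (List (Fin n × Bool))) :
    REPred fun p : List (List (Fin n × Bool)) × List (List (Fin n × Bool)) =>
      Subgroup.closure {x | ∃ u ∈ p.1, x = wordElt R u} =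
        Subgroup.closure {x | ∃ u ∈ p.2, x = wordElt R u} := by
  have hcert := primrecRel_isMembershipCertificate R
  have hboth : PrimrecRel fun (p : List (List (Fin n × Bool)) × List (List (Fin n × Bool)))
      (E : List (List (Factor (Fin n))) × List (List (Factor (Fin n)))) =>
      IsMembershipCertificate R p.2 p.1 E.1 ∧ IsMembershipCertificate R p.1 p.2 E.2 :=
    PrimrecPred.and
      (hcert.comp (Primrec.pair (Primrec.snd.comp Primrec.fst) (Primrec.fst.comp Primrec.fst))
        (Primrec.fst.comp Primrec.snd))
      (hcert.comp Primrec.fst (Primrec.snd.comp Primrec.snd))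
  refine (REPred.exists_of_primrecRel hboth).of_eq fun p => ?_
  rw [le_antisymm_iff, closure_wordElt_le_iff_exists_certificate,
    closure_wordElt_le_iff_exists_certificate, Prod.exists, exists_and_exists_comm]
end

section
/- Fix n, m : ℕ, let R be a finite list of words in n generators defining G = PresentedGroup S (S ⊆ FreeGroup (Fin n) the set of elements determined by R), and let R' be a finite list of words in m generators defining π = PresentedGroup S'. Then the predicate on lists of words X (in n generators) asserting that, for T the set of elements of G represented by the words in X, one has Subgroup.closure T = Subgroup.normalClosure T and the quotient group G ⧸ Subgroup.normalClosure T is isomorphic to π (i.e. Nonempty (G ⧸ Subgroup.normalClosure T ≃* π)), satisfies REPred. -/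
def SigmaOnePred {α : Type} [Primcodable α] (p : α → Prop) : Prop :=
  ∃ (β : Type) (_ : Primcodable β) (q : α → β → Prop), PrimrecRel q ∧ ∀ a, p a ↔ ∃ b, q a b

namespace SigmaOnePred

variable {α γ : Type} [Primcodable α] [Primcodable γ]

theorem of_iff {p q : α → Prop} (hp : SigmaOnePred p) (H : ∀ a, p a ↔ q a) :
    SigmaOnePred q := by
  obtain ⟨β, _, r, hr, hpr⟩ := hp
  exact ⟨β, _, r, hr, fun a => (H a).symm.trans (hpr a)⟩

theorem of_primrecPred {p : α → Prop} (hp : PrimrecPred p) : SigmaOnePred p :=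
  ⟨Unit, inferInstance, fun a _ => p a, hp.comp Primrec.fst, fun a => by simp⟩

theorem comp {p : γ → Prop} (hp : SigmaOnePred p) {f : α → γ} (hf : Primrec f) :
    SigmaOnePred fun a => p (f a) := by
  obtain ⟨β, _, r, hr, hpr⟩ := hp
  exact ⟨β, _, fun a b => r (f a) b, hr.comp (hf.comp Primrec.fst) Primrec.snd, fun a => hpr _⟩

protected theorem and {p q : α → Prop} (hp : SigmaOnePred p) (hq : SigmaOnePred q) :
    SigmaOnePred fun a => p a ∧ q a := by
  obtain ⟨β, _, r, hr, hpr⟩ := hp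
  obtain ⟨δ, _, s, hs, hqs⟩ := hq
  refine ⟨β × δ, inferInstance, fun a b => r a b.1 ∧ s a b.2,
    (hr.comp Primrec.fst (Primrec.fst.comp Primrec.snd)).and
      (hs.comp Primrec.fst (Primrec.snd.comp Primrec.snd)), fun a => ?_⟩
  simp [hpr, hqs]

theorem proj {p : α × γ → Prop} (hp : SigmaOnePred p) :
    SigmaOnePred fun a => ∃ c, p (a, c) := by
  obtain ⟨β, _, r, hr, hpr⟩ := hp
  refine ⟨γ × β, inferInstance, fun a b => r (a, b.1) b.2,
    hr.comp (Primrec.fst.pair (Primrec.fst.comp Primrec.snd)) (Primrec.snd.comp Primrec.snd),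
    fun a => ?_⟩
  simp only [Prod.exists]
  exact exists_congr fun c => hpr (a, c)

theorem forall_mem {p : α × γ → Prop} {L : α → List γ} (hL : Primrec L)
    (hp : SigmaOnePred p) :
    SigmaOnePred fun a => ∀ c ∈ L a, p (a, c) := by
  obtain ⟨β, _, r, hr, hpr⟩ := hp
  have hall : PrimrecRel fun (l : List (γ × β)) (a : α) => ∀ t ∈ l, r (a, t.1) t.2 :=
    PrimrecRel.forall_mem_list <|
      hr.comp (Primrec.snd.pair (Primrec.fst.comp Primrec.fst)) (Primrec.snd.comp Primrec.fst)
  refine ⟨List (γ × β), inferInstance,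
    fun a l => l.map Prod.fst = L a ∧ ∀ t ∈ l, r (a, t.1) t.2,
    (Primrec.eq.comp (Primrec.list_map Primrec.snd (Primrec.fst.comp Primrec.snd).to₂)
      (hL.comp Primrec.fst)).and (hall.comp Primrec.snd Primrec.fst), fun a => ?_⟩
  constructor
  · intro h
    choose w hw using fun c (hc : c ∈ L a) => (hpr (a, c)).1 (h c hc)
    refine ⟨(L a).attach.map fun c => (c.1, w c.1 c.2), by simp, ?_⟩
    simp only [List.mem_map, List.mem_attach, true_and, forall_exists_index]
    rintro _ c rfl
    exact hw c.1 c.2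
  · rintro ⟨l, hl, hr⟩ c hc
    rw [← hl] at hc
    obtain ⟨t, ht, rfl⟩ := List.mem_map.1 hc
    exact (hpr (a, t.1)).2 ⟨t.2, hr t ht⟩

theorem rePred {p : α → Prop} (hp : SigmaOnePred p) : REPred p := by
  obtain ⟨β, _, r, ⟨hdec, hr⟩, hpr⟩ := hp
  let : DecidableRel r := fun a b => hdec (a, b)
  have hf : Computable₂ fun (a : α) (k : ℕ) =>
      (Encodable.decode (α := β) k).bind fun b => if r a b then some () else none :=
    (Primrec.option_bind (Primrec.decode.comp Primrec.snd)
      (Primrec.ite (hr.comp ((Primrec.fst.comp Primrec.fst).pair Primrec.snd)).primrecPred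
        (Primrec.const (some ())) (Primrec.const none)).to₂).to_comp
  refine (Partrec.rfindOpt hf).dom_re.of_eq fun a => ?_
  rw [Nat.rfindOpt_dom, hpr]
  constructor
  · rintro ⟨k, _, hk⟩
    simp only [Option.mem_def, Option.bind_eq_some_iff] at hk
    obtain ⟨b, -, hb⟩ := hk
    exact ⟨b, by simpa using hb⟩
  · rintro ⟨b, hb⟩
    exact ⟨Encodable.encode b, (), by simp [hb]⟩

end SigmaOnePred

theorem PrimrecRel.list_mem {γ : Type} [Primcodable γ] :
    PrimrecRel fun (L : List γ) (x : γ) => x ∈ L :=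
  (PrimrecRel.exists_mem_list Primrec.eq).of_eq fun L x => by simp

theorem Submonoid.mem_closure_image_iff_exists_list {ι M : Type*} [Monoid M] (f : ι → M)
    (W : Set ι) (x : M) :
    x ∈ Submonoid.closure (f '' W) ↔ ∃ l : List ι, (∀ i ∈ l, i ∈ W) ∧ (l.map f).prod = x := by
  constructor
  · intro hx
    induction hx using Submonoid.closure_induction with
    | mem y hy =>
      obtain ⟨i, hi, rfl⟩ := hy
      exact ⟨[i], by simpa using hi, by simp⟩
    | one => exact ⟨[], by simp, by simp⟩
    | mul y z _ _ hy hz =>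
      obtain ⟨l, hl, rfl⟩ := hy
      obtain ⟨l', hl', rfl⟩ := hz
      exact ⟨l ++ l', by simp only [List.mem_append]; grind, by simp⟩
  · rintro ⟨l, hl, rfl⟩
    refine Submonoid.list_prod_mem _ fun y hy => ?_
    obtain ⟨i, hi, rfl⟩ := List.mem_map.1 hy
    exact Submonoid.subset_closure ⟨i, hl i hi, rfl⟩

theorem Group.conjugatesOfSet_inv {G : Type*} [Group G] (s : Set G) :
    Group.conjugatesOfSet s⁻¹ = (Group.conjugatesOfSet s)⁻¹ := by
  ext y
  simp only [Set.mem_inv, Group.mem_conjugatesOfSet_iff, isConj_iff]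
  constructor
  · rintro ⟨a, ha, c, rfl⟩
    exact ⟨a⁻¹, ha, c, by group⟩
  · rintro ⟨a, ha, c, hc⟩
    exact ⟨a⁻¹, by simpa using ha, c, by rw [← inv_inj, ← hc]; group⟩

theorem Subgroup.conj_mem_closure {G : Type*} [Group G] {T : Set G} {g : G}
    (hg : ∀ t ∈ T, g * t * g⁻¹ ∈ Subgroup.closure T) {x : G} (hx : x ∈ Subgroup.closure T) :
    g * x * g⁻¹ ∈ Subgroup.closure T := by
  have : (Subgroup.closure T).map (MulAut.conj g).toMonoidHom ≤ Subgroup.closure T := by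
    rw [MonoidHom.map_closure, Subgroup.closure_le]
    rintro _ ⟨t, ht, rfl⟩
    exact hg t ht
  exact this ⟨x, hx, rfl⟩

theorem Subgroup.closure_eq_normalClosure_iff {G : Type*} [Group G] {A T : Set G}
    (hA : Subgroup.closure A = ⊤) :
    Subgroup.closure T = Subgroup.normalClosure T ↔
      ∀ a ∈ A, ∀ t ∈ T, a * t * a⁻¹ ∈ Subgroup.closure T ∧ a⁻¹ * t * a ∈ Subgroup.closure T := by
  have normal_iff :
      Subgroup.closure T = Subgroup.normalClosure T ↔ (Subgroup.closure T).Normal :=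
    ⟨fun h => h ▸ Subgroup.normalClosure_normal, fun _ => le_antisymm
      Subgroup.closure_le_normalClosure (Subgroup.normalClosure_le_normal Subgroup.subset_closure)⟩
  rw [normal_iff, ← Subgroup.normalizer_eq_top_iff, ← top_le_iff, ← hA, Subgroup.closure_le]
  refine forall₂_congr fun a _ => ⟨fun ha t ht => ?_, fun h => ?_⟩
  · rw [SetLike.mem_coe] at ha
    have ha' := Subgroup.inv_mem _ ha
    rw [Subgroup.mem_normalizer_iff] at ha ha'
    exact ⟨(ha t).1 (Subgroup.subset_closure ht),
      by simpa using (ha' t).1 (Subgroup.subset_closure ht)⟩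
  · rw [SetLike.mem_coe, Subgroup.mem_normalizer_iff]
    refine fun x => ⟨Subgroup.conj_mem_closure fun t ht => (h t ht).1, fun hx => ?_⟩
    simpa [mul_assoc] using
      Subgroup.conj_mem_closure (g := a⁻¹) (by simpa using fun t ht => (h t ht).2) hx

theorem PresentedGroup.normalClosure_image_mk {α : Type*} (r s : Set (FreeGroup α)) :
    Subgroup.normalClosure (PresentedGroup.mk r '' s) =
      (Subgroup.normalClosure (r ∪ s)).map (PresentedGroup.mk r) := by
  have hr : PresentedGroup.mk r '' r ⊆ {1} := by
    rintro _ ⟨x, hx, rfl⟩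
    exact PresentedGroup.one_of_mem hx
  rw [Subgroup.map_normalClosure _ _ (PresentedGroup.mk_surjective r), Set.image_union,
    Subgroup.normalClosure_union, Subgroup.normalClosure_eq_bot_iff.2 hr, bot_sup_eq]

def PresentedGroup.quotientMulEquivUnion {α : Type*} (r s : Set (FreeGroup α)) :
    PresentedGroup r ⧸ Subgroup.normalClosure (PresentedGroup.mk r '' s) ≃*
      PresentedGroup (r ∪ s) :=
  haveI : ((Subgroup.normalClosure (r ∪ s)).map (PresentedGroup.mk r)).Normal :=
    Subgroup.normalClosure_normal.map _ (PresentedGroup.mk_surjective r)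
  (QuotientGroup.quotientMulEquivOfEq (normalClosure_image_mk r s)).trans
    (QuotientGroup.quotientQuotientEquivQuotient _ _
      (Subgroup.normalClosure_mono Set.subset_union_left))

namespace FreeGroup

abbrev Word (α : Type) := List (α × Bool)

variable {α β : Type}

def substWord (a : α → Word β) (w : Word α) : Word β :=
  w.flatMap fun x => bif x.2 then a x.1 else invRev (a x.1)

theorem mk_surjective : Function.Surjective (mk : Word α → FreeGroup α) :=
  fun x => Quot.exists_rep x

theorem mk_flatten (L : List (Word α)) : mk L.flatten = (L.map mk).prod := by
  induction L with
  | nil => rfl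
  | cons u L ih => rw [List.flatten_cons, ← mul_mk, ih, List.map_cons, List.prod_cons]

theorem mk_substWord (a : α → Word β) (w : Word α) :
    mk (substWord a w) = lift (fun i => mk (a i)) (mk w) := by
  rw [lift_mk, substWord, List.flatMap_def, mk_flatten, List.map_map]
  congr 1
  refine List.map_congr_left fun ⟨i, b⟩ _ => ?_
  cases b <;> simp [inv_mk]

def reduceStep [DecidableEq α] (x : α × Bool) : Word α → Word α
  | [] => [x]
  | y :: t => if x.1 = y.1 ∧ x.2 = !y.2 then t else x :: y :: t

theorem reduce_eq_foldr_s8 [DecidableEq α] (w : Word α) : reduce w = w.foldr reduceStep [] := by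
  induction w with
  | nil => rfl
  | cons x w ih =>
    rw [reduce.cons, List.foldr_cons, ← ih]
    cases reduce w <;> rfl

section Computability

variable [Primcodable α] [Primcodable β]

theorem primrec_invRev_s8 : Primrec (invRev : Word α → Word α) :=
  Primrec.list_reverse.comp <| Primrec.list_map .id <|
    (Primrec.fst.comp Primrec.snd).pair (Primrec.not.comp (Primrec.snd.comp Primrec.snd)) |>.to₂

theorem primrec_append_map_invRev : Primrec fun Q : List (Word α) => Q ++ Q.map invRev :=
  Primrec.list_append.comp .id (Primrec.list_map .id (primrec_invRev_s8.comp Primrec.snd).to₂)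

theorem primrec₂_reduceStep [DecidableEq α] : Primrec₂ (reduceStep : α × Bool → _ → _) := by
  have hx : Primrec fun q : ((α × Bool) × Word α) × (α × Bool) × Word α => q.1.1 :=
    Primrec.fst.comp Primrec.fst
  have hy : Primrec fun q : ((α × Bool) × Word α) × (α × Bool) × Word α => q.2.1 :=
    Primrec.fst.comp Primrec.snd
  have hcons := Primrec.ite
    ((Primrec.eq.comp (Primrec.fst.comp hx) (Primrec.fst.comp hy)).and
      (Primrec.eq.comp (Primrec.snd.comp hx) (Primrec.not.comp (Primrec.snd.comp hy))))
    (Primrec.snd.comp Primrec.snd)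
    (Primrec.list_cons.comp hx (Primrec.list_cons.comp hy (Primrec.snd.comp Primrec.snd)))
  refine (Primrec.list_casesOn Primrec.snd
    (Primrec.list_cons.comp Primrec.fst (Primrec.const [])) hcons.to₂).of_eq fun ⟨x, l⟩ => ?_
  cases l <;> rfl

theorem primrec_reduce_s8 [DecidableEq α] : Primrec (reduce : Word α → Word α) :=
  (Primrec.list_foldr .id (Primrec.const [])
    (primrec₂_reduceStep.comp₂ (Primrec.fst.comp₂ .right) (Primrec.snd.comp₂ .right))).of_eq
    fun w => (reduce_eq_foldr_s8 w).symm

theorem primrecRel_mk_eq_mk [DecidableEq α] : PrimrecRel fun u v : Word α => mk u = mk v :=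
  (Primrec.eq.comp₂ (primrec_reduce_s8.comp₂ .left) (primrec_reduce_s8.comp₂ .right)).of_eq
    fun _ _ => ⟨reduce.exact, reduce.sound⟩

theorem primrec₂_substWord {n : ℕ} :
    Primrec₂ (substWord : (Fin n → Word β) → Word (Fin n) → Word β) := by
  have happ : Primrec fun p : ((Fin n → Word β) × Word (Fin n)) × (Fin n × Bool) => p.1.1 p.2.1 :=
    Primrec.fin_app.comp (Primrec.fst.comp Primrec.fst) (Primrec.fst.comp Primrec.snd)
  exact Primrec.list_flatMap Primrec.snd <| Primrec.cond (Primrec.snd.comp Primrec.snd) happ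
    (primrec_invRev_s8.comp happ) |>.to₂

end Computability

end FreeGroup

open FreeGroup (Word mk invRev inv_mk mul_mk substWord mk_flatten mk_substWord)

section Words

variable {α β : Type}

theorem relsOf_append (R X : List (Word α)) : relsOf (R ++ X) = relsOf R ∪ relsOf X := by
  ext x
  simp only [relsOf, List.mem_append, Set.mem_ofPred_eq, Set.mem_union]
  grind

theorem relsOf_map_invRev (Q : List (Word α)) : relsOf (Q.map invRev) = (relsOf Q)⁻¹ := by
  ext x
  simp only [relsOf, List.mem_map, Set.mem_ofPred_eq, Set.mem_inv]
  constructor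
  · rintro ⟨_, ⟨r, hr, rfl⟩, rfl⟩
    exact ⟨r, hr, by rw [← inv_mk, inv_inv]⟩
  · rintro ⟨r, hr, hx⟩
    exact ⟨invRev r, ⟨r, hr, rfl⟩, by rw [← inv_mk, ← hx, inv_inv]⟩

theorem conjugatesOfSet_relsOf (Q : List (Word α)) :
    Group.conjugatesOfSet (relsOf Q) =
      (fun t : Word α × Word α => mk (t.1 ++ t.2 ++ invRev t.1)) '' {t | t.2 ∈ Q} := by
  ext y
  simp only [Group.mem_conjugatesOfSet_iff, isConj_iff, relsOf, Set.mem_ofPred_eq, Set.mem_image,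
    ← mul_mk, ← inv_mk]
  constructor
  · rintro ⟨_, ⟨r, hr, rfl⟩, c, rfl⟩
    obtain ⟨c, rfl⟩ := FreeGroup.mk_surjective c
    exact ⟨(c, r), hr, rfl⟩
  · rintro ⟨⟨c, r⟩, hr, rfl⟩
    exact ⟨mk r, ⟨r, hr, rfl⟩, mk c, rfl⟩

theorem mem_normalClosure_relsOf_iff (Q : List (Word α)) (w : Word α) :
    mk w ∈ Subgroup.normalClosure (relsOf Q) ↔
      ∃ l : List (Word α × Word α), (∀ t ∈ l, t.2 ∈ Q ++ Q.map invRev) ∧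
        mk (l.flatMap fun t => t.1 ++ t.2 ++ invRev t.1) = mk w := by
  rw [Subgroup.normalClosure, ← Subgroup.mem_toSubmonoid, Subgroup.closure_toSubmonoid,
    ← Group.conjugatesOfSet_inv, ← Group.conjugatesOfSet_union, ← relsOf_map_invRev,
    ← relsOf_append, conjugatesOfSet_relsOf, Submonoid.mem_closure_image_iff_exists_list]
  simp only [Set.mem_ofPred_eq, List.flatMap_def, mk_flatten, List.map_map, Function.comp_def]

theorem wordElt_append (R : List (Word α)) (u v : Word α) :
    wordElt R (u ++ v) = wordElt R u * wordElt R v := by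
  rw [wordElt, ← mul_mk, map_mul]
  rfl

theorem wordElt_invRev (R : List (Word α)) (u : Word α) :
    wordElt R (invRev u) = (wordElt R u)⁻¹ := by
  rw [wordElt, ← inv_mk, map_inv]
  rfl

theorem wordElt_flatten (R L : List (Word α)) :
    wordElt R L.flatten = (L.map (wordElt R)).prod := by
  rw [wordElt, mk_flatten, map_list_prod, List.map_map]
  rfl

theorem wordElt_singleton_true (R : List (Word α)) (i : α) :
    wordElt R [(i, true)] = PresentedGroup.of i :=
  rfl

theorem wordElt_singleton_false (R : List (Word α)) (i : α) :
    wordElt R [(i, false)] = (PresentedGroup.of i)⁻¹ :=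
  wordElt_invRev R [(i, true)]

theorem wordElt_surjective (R : List (Word α)) : Function.Surjective (wordElt R) := fun g => by
  obtain ⟨x, rfl⟩ := PresentedGroup.mk_surjective _ g
  obtain ⟨w, rfl⟩ := FreeGroup.mk_surjective x
  exact ⟨w, rfl⟩

theorem wordElt_eq_wordElt_iff (R : List (Word α)) (u v : Word α) :
    wordElt R u = wordElt R v ↔ mk (invRev u ++ v) ∈ Subgroup.normalClosure (relsOf R) := by
  rw [← PresentedGroup.mk_eq_one_iff, ← wordElt, wordElt_append, wordElt_invRev,
    inv_mul_eq_one]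

theorem setOf_wordElt_eq_image (R X : List (Word α)) :
    {x | ∃ u ∈ X, x = wordElt R u} = PresentedGroup.mk (relsOf R) '' relsOf X := by
  ext x
  constructor
  · rintro ⟨u, hu, rfl⟩
    exact ⟨mk u, ⟨u, hu, rfl⟩, rfl⟩
  · rintro ⟨_, ⟨u, hu, rfl⟩, rfl⟩
    exact ⟨u, hu, rfl⟩

theorem mem_closure_wordElt_iff (R X : List (Word α)) (y : PresentedGroup (relsOf R)) :
    y ∈ Subgroup.closure {x | ∃ u ∈ X, x = wordElt R u} ↔
      ∃ l : List (Word α), (∀ u ∈ l, u ∈ X ++ X.map invRev) ∧ wordElt R l.flatten = y := by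
  have hgen : {x | ∃ u ∈ X, x = wordElt R u} ∪ {x | ∃ u ∈ X, x = wordElt R u}⁻¹ =
      wordElt R '' {u | u ∈ X ++ X.map invRev} := by
    ext x
    simp only [Set.mem_union, Set.mem_inv, Set.mem_ofPred_eq, Set.mem_image, List.mem_append,
      List.mem_map]
    constructor
    · rintro (⟨u, hu, rfl⟩ | ⟨u, hu, hx⟩)
      · exact ⟨u, Or.inl hu, rfl⟩
      · exact ⟨invRev u, Or.inr ⟨u, hu, rfl⟩, by rw [wordElt_invRev, ← hx, inv_inv]⟩
    · rintro ⟨_, hu | ⟨u, hu, rfl⟩, rfl⟩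
      · exact Or.inl ⟨_, hu, rfl⟩
      · exact Or.inr ⟨u, hu, by rw [wordElt_invRev, inv_inv]⟩
  rw [← Subgroup.mem_toSubmonoid, Subgroup.closure_toSubmonoid, hgen,
    Submonoid.mem_closure_image_iff_exists_list]
  simp only [Set.mem_ofPred_eq, wordElt_flatten]

theorem closure_wordElt_eq_normalClosure_iff (R X : List (Word α)) :
    Subgroup.closure {x | ∃ u ∈ X, x = wordElt R u} =
        Subgroup.normalClosure {x | ∃ u ∈ X, x = wordElt R u} ↔
      ∀ i, ∀ u ∈ X,
        wordElt R ([(i, true)] ++ u ++ [(i, false)]) ∈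
            Subgroup.closure {x | ∃ u ∈ X, x = wordElt R u} ∧
          wordElt R ([(i, false)] ++ u ++ [(i, true)]) ∈
            Subgroup.closure {x | ∃ u ∈ X, x = wordElt R u} := by
  rw [Subgroup.closure_eq_normalClosure_iff (PresentedGroup.closure_range_of _)]
  simp only [wordElt_append, wordElt_singleton_true, wordElt_singleton_false]
  constructor
  · intro h i u hu
    exact h _ ⟨i, rfl⟩ _ ⟨u, hu, rfl⟩
  · rintro h _ ⟨i, rfl⟩ _ ⟨u, hu, rfl⟩
    exact h i u hu

theorem lift_wordElt (Q' : List (Word β)) (a : α → Word β) (w : Word α) :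
    FreeGroup.lift (fun i => wordElt Q' (a i)) (mk w) = wordElt Q' (substWord a w) := by
  have : (PresentedGroup.mk (relsOf Q')).comp (FreeGroup.lift fun i => mk (a i)) =
      FreeGroup.lift fun i => wordElt Q' (a i) :=
    FreeGroup.ext_hom _ _ fun i => by simp [wordElt]
  rw [wordElt, mk_substWord, ← this, MonoidHom.comp_apply]

theorem map_wordElt {Q : List (Word α)} {Q' : List (Word β)}
    (φ : PresentedGroup (relsOf Q) →* PresentedGroup (relsOf Q')) {a : α → Word β}
    (h : ∀ i, φ (PresentedGroup.of i) = wordElt Q' (a i)) (w : Word α) :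
    φ (wordElt Q w) = wordElt Q' (substWord a w) := by
  have : φ.comp (PresentedGroup.mk (relsOf Q)) = FreeGroup.lift fun i => wordElt Q' (a i) :=
    FreeGroup.ext_hom _ _ fun i => by rw [FreeGroup.lift_apply_of]; exact h i
  rw [← lift_wordElt, ← this]
  rfl

theorem nonempty_mulEquiv_iff_exists_words (Q : List (Word α)) (Q' : List (Word β)) :
    Nonempty (PresentedGroup (relsOf Q) ≃* PresentedGroup (relsOf Q')) ↔
      ∃ (a : α → Word β) (b : β → Word α),
        (∀ r ∈ Q, wordElt Q' (substWord a r) = 1) ∧ (∀ r ∈ Q', wordElt Q (substWord b r) = 1) ∧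
        (∀ i, wordElt Q (substWord b (a i)) = PresentedGroup.of i) ∧
        (∀ j, wordElt Q' (substWord a (b j)) = PresentedGroup.of j) := by
  constructor
  · rintro ⟨e⟩
    choose a ha using fun i => wordElt_surjective Q' (e (PresentedGroup.of i))
    choose b hb using fun j => wordElt_surjective Q (e.symm (PresentedGroup.of j))
    have he : ∀ w, e (wordElt Q w) = wordElt Q' (substWord a w) :=
      map_wordElt e.toMonoidHom fun i => (ha i).symm
    have he' : ∀ w, e.symm (wordElt Q' w) = wordElt Q (substWord b w) :=
      map_wordElt e.symm.toMonoidHom fun j => (hb j).symm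
    refine ⟨a, b, fun r hr => ?_, fun r hr => ?_, fun i => ?_, fun j => ?_⟩
    · rw [← he, wordElt, PresentedGroup.one_of_mem (rels := relsOf _) ⟨r, hr, rfl⟩, map_one]
    · rw [← he', wordElt, PresentedGroup.one_of_mem (rels := relsOf _) ⟨r, hr, rfl⟩, map_one]
    · rw [← he', ha, e.symm_apply_apply]
    · rw [← he, hb, e.apply_symm_apply]
  · rintro ⟨a, b, ha, hb, hba, hab⟩
    let φ := PresentedGroup.toGroup (rels := relsOf Q) (f := fun i => wordElt Q' (a i)) <| by
      rintro _ ⟨r, hr, rfl⟩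
      rw [lift_wordElt, ha r hr]
    let ψ := PresentedGroup.toGroup (rels := relsOf Q') (f := fun j => wordElt Q (b j)) <| by
      rintro _ ⟨r, hr, rfl⟩
      rw [lift_wordElt, hb r hr]
    have hφ := map_wordElt φ fun i => PresentedGroup.toGroup.of _
    have hψ := map_wordElt ψ fun j => PresentedGroup.toGroup.of _
    refine ⟨MonoidHom.toMulEquiv φ ψ (PresentedGroup.ext fun i => ?_)
      (PresentedGroup.ext fun j => ?_)⟩
    · rw [MonoidHom.comp_apply, PresentedGroup.toGroup.of, hψ, hba, MonoidHom.id_apply]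
    · rw [MonoidHom.comp_apply, PresentedGroup.toGroup.of, hφ, hab, MonoidHom.id_apply]

end Words

section WordProblem

variable {α : Type} [Primcodable α] [DecidableEq α]

theorem sigmaOnePred_mk_mem_normalClosure :
    SigmaOnePred fun p : List (Word α) × Word α =>
      mk p.2 ∈ Subgroup.normalClosure (relsOf p.1) := by
  have hrel : PrimrecRel fun (p : List (Word α) × Word α) (l : List (Word α × Word α)) =>
      ∀ t ∈ l, t.2 ∈ p.1 ++ p.1.map invRev :=
    (PrimrecRel.forall_mem_list (R := fun (t : Word α × Word α) (p : List (Word α) × Word α) =>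
      t.2 ∈ p.1 ++ p.1.map invRev) (PrimrecRel.list_mem.comp
        (FreeGroup.primrec_append_map_invRev.comp (Primrec.fst.comp Primrec.snd))
        (Primrec.snd.comp Primrec.fst))).comp Primrec.snd Primrec.fst
  have hconj : Primrec fun t : Word α × Word α => t.1 ++ t.2 ++ invRev t.1 :=
    Primrec.list_append.comp (Primrec.list_append.comp Primrec.fst Primrec.snd)
      (FreeGroup.primrec_invRev_s8.comp Primrec.fst)
  have heq : PrimrecRel fun (p : List (Word α) × Word α) (l : List (Word α × Word α)) =>
      mk (l.flatMap fun t => t.1 ++ t.2 ++ invRev t.1) = mk p.2 :=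
    FreeGroup.primrecRel_mk_eq_mk.comp
      (Primrec.list_flatMap Primrec.snd (hconj.comp Primrec.snd).to₂)
      (Primrec.snd.comp Primrec.fst)
  exact (SigmaOnePred.proj (SigmaOnePred.of_primrecPred (hrel.and heq))).of_iff
    fun p => (mem_normalClosure_relsOf_iff p.1 p.2).symm

theorem sigmaOnePred_wordElt_eq_one :
    SigmaOnePred fun p : List (Word α) × Word α => wordElt p.1 p.2 = 1 :=
  sigmaOnePred_mk_mem_normalClosure.of_iff fun _ => PresentedGroup.mk_eq_one_iff.symm

theorem sigmaOnePred_wordElt_eq :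
    SigmaOnePred fun p : List (Word α) × Word α × Word α =>
      wordElt p.1 p.2.1 = wordElt p.1 p.2.2 := by
  have hf : Primrec fun p : List (Word α) × Word α × Word α => (p.1, invRev p.2.1 ++ p.2.2) :=
    Primrec.fst.pair (Primrec.list_append.comp
      (FreeGroup.primrec_invRev_s8.comp (Primrec.fst.comp Primrec.snd)) (Primrec.snd.comp Primrec.snd))
  exact (sigmaOnePred_mk_mem_normalClosure.comp hf).of_iff
    fun p => (wordElt_eq_wordElt_iff p.1 p.2.1 p.2.2).symm

theorem sigmaOnePred_wordElt_mem_closure :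
    SigmaOnePred fun p : (List (Word α) × List (Word α)) × Word α =>
      wordElt p.1.1 p.2 ∈ Subgroup.closure {x | ∃ u ∈ p.1.2, x = wordElt p.1.1 u} := by
  have hrel : PrimrecRel fun (p : (List (Word α) × List (Word α)) × Word α)
      (l : List (Word α)) => ∀ u ∈ l, u ∈ p.1.2 ++ p.1.2.map invRev :=
    (PrimrecRel.forall_mem_list (R := fun (u : Word α)
      (p : (List (Word α) × List (Word α)) × Word α) => u ∈ p.1.2 ++ p.1.2.map invRev)
      (PrimrecRel.list_mem.comp (FreeGroup.primrec_append_map_invRev.comp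
        (Primrec.snd.comp (Primrec.fst.comp Primrec.snd))) Primrec.fst)).comp
      Primrec.snd Primrec.fst
  have hf : Primrec fun x : ((List (Word α) × List (Word α)) × Word α) × List (Word α) =>
      (x.1.1.1, x.2.flatten, x.1.2) :=
    (Primrec.fst.comp (Primrec.fst.comp Primrec.fst)).pair
      ((Primrec.list_flatten.comp Primrec.snd).pair (Primrec.snd.comp Primrec.fst))
  exact (SigmaOnePred.proj ((SigmaOnePred.of_primrecPred hrel).and
    (sigmaOnePred_wordElt_eq.comp hf))).of_iff
    fun p => (mem_closure_wordElt_iff p.1.1 p.1.2 (wordElt p.1.1 p.2)).symm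

end WordProblem

section FinitePresentations

variable {n m : ℕ}

theorem sigmaOnePred_closure_eq_normalClosure :
    SigmaOnePred fun p : List (Word (Fin n)) × List (Word (Fin n)) =>
      Subgroup.closure {x | ∃ u ∈ p.2, x = wordElt p.1 u} =
        Subgroup.normalClosure {x | ∃ u ∈ p.2, x = wordElt p.1 u} := by
  have hconj (b : Bool) : Primrec fun y : ((List (Word (Fin n)) × List (Word (Fin n))) × Fin n) ×
      Word (Fin n) => (y.1.1, [(y.1.2, b)] ++ y.2 ++ [(y.1.2, !b)]) :=
    (Primrec.fst.comp Primrec.fst).pair <| Primrec.list_append.comp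
      (Primrec.list_append.comp (Primrec.list_cons.comp
        ((Primrec.snd.comp Primrec.fst).pair (Primrec.const b)) (Primrec.const [])) Primrec.snd)
      (Primrec.list_cons.comp ((Primrec.snd.comp Primrec.fst).pair (Primrec.const !b))
        (Primrec.const []))
  have hmem := (sigmaOnePred_wordElt_mem_closure.comp (hconj true)).and
    (sigmaOnePred_wordElt_mem_closure.comp (hconj false))
  exact (SigmaOnePred.forall_mem (Primrec.const (List.finRange n))
    (SigmaOnePred.forall_mem (Primrec.snd.comp Primrec.fst) hmem)).of_iff fun p => by
      simp [closure_wordElt_eq_normalClosure_iff]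

theorem sigmaOnePred_forall_wordElt_substWord_eq_one :
    SigmaOnePred fun x : (List (Word (Fin n)) × List (Word (Fin m))) × (Fin n → Word (Fin m)) =>
      ∀ r ∈ x.1.1, wordElt x.1.2 (substWord x.2 r) = 1 := by
  have hf : Primrec fun y : ((List (Word (Fin n)) × List (Word (Fin m))) ×
      (Fin n → Word (Fin m))) × Word (Fin n) => (y.1.1.2, substWord y.1.2 y.2) :=
    (Primrec.snd.comp (Primrec.fst.comp Primrec.fst)).pair
      (FreeGroup.primrec₂_substWord.comp (Primrec.snd.comp Primrec.fst) Primrec.snd)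
  exact SigmaOnePred.forall_mem (Primrec.fst.comp Primrec.fst)
    (sigmaOnePred_wordElt_eq_one.comp hf)

theorem sigmaOnePred_forall_wordElt_substWord_substWord_eq_of :
    SigmaOnePred fun x : (List (Word (Fin n)) × (Fin n → Word (Fin m))) × (Fin m → Word (Fin n)) =>
      ∀ i, wordElt x.1.1 (substWord x.2 (x.1.2 i)) = PresentedGroup.of i := by
  have hf : Primrec fun y : ((List (Word (Fin n)) × (Fin n → Word (Fin m))) ×
      (Fin m → Word (Fin n))) × Fin n => (y.1.1.1, substWord y.1.2 (y.1.1.2 y.2), [(y.2, true)]) :=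
    (Primrec.fst.comp (Primrec.fst.comp Primrec.fst)).pair
      ((FreeGroup.primrec₂_substWord.comp (Primrec.snd.comp Primrec.fst)
        (Primrec.fin_app.comp (Primrec.snd.comp (Primrec.fst.comp Primrec.fst)) Primrec.snd)).pair
      (Primrec.list_cons.comp (Primrec.snd.pair (Primrec.const true)) (Primrec.const [])))
  exact (SigmaOnePred.forall_mem (Primrec.const (List.finRange n))
    (sigmaOnePred_wordElt_eq.comp hf)).of_iff fun x => by simp [wordElt_singleton_true]

theorem sigmaOnePred_nonempty_mulEquiv :
    SigmaOnePred fun p : List (Word (Fin n)) × List (Word (Fin m)) =>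
      Nonempty (PresentedGroup (relsOf p.1) ≃* PresentedGroup (relsOf p.2)) := by
  have hQ : Primrec fun x : ((List (Word (Fin n)) × List (Word (Fin m))) ×
      (Fin n → Word (Fin m))) × (Fin m → Word (Fin n)) => x.1.1.1 :=
    Primrec.fst.comp (Primrec.fst.comp Primrec.fst)
  have hQ' : Primrec fun x : ((List (Word (Fin n)) × List (Word (Fin m))) ×
      (Fin n → Word (Fin m))) × (Fin m → Word (Fin n)) => x.1.1.2 :=
    Primrec.snd.comp (Primrec.fst.comp Primrec.fst)
  have ha : Primrec fun x : ((List (Word (Fin n)) × List (Word (Fin m))) ×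
      (Fin n → Word (Fin m))) × (Fin m → Word (Fin n)) => x.1.2 :=
    Primrec.snd.comp Primrec.fst
  have h1 := sigmaOnePred_forall_wordElt_substWord_eq_one.comp ((hQ.pair hQ').pair ha)
  have h2 := sigmaOnePred_forall_wordElt_substWord_eq_one.comp ((hQ'.pair hQ).pair Primrec.snd)
  have h3 := sigmaOnePred_forall_wordElt_substWord_substWord_eq_of.comp
    ((hQ.pair ha).pair Primrec.snd)
  have h4 := sigmaOnePred_forall_wordElt_substWord_substWord_eq_of.comp
    ((hQ'.pair Primrec.snd).pair ha)
  exact (SigmaOnePred.proj (SigmaOnePred.proj (h1.and (h2.and (h3.and h4))))).of_iff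
    fun p => (nonempty_mulEquiv_iff_exists_words p.1 p.2).symm

end FinitePresentations

/-- It is recursively enumerable whether the subgroup generated by a finite list of words is
normal with quotient isomorphic to a second given finitely presented group. -/
theorem quotient_isomorphism_re (n m : ℕ)
    (R : List (List (Fin n × Bool))) (R' : List (List (Fin m × Bool))) :
    REPred fun X : List (List (Fin n × Bool)) =>
      Subgroup.closure {x | ∃ u ∈ X, x = wordElt R u} =
          Subgroup.normalClosure {x | ∃ u ∈ X, x = wordElt R u} ∧
        Nonempty
          ((PresentedGroup (relsOf R) ⧸
              Subgroup.normalClosure {x | ∃ u ∈ X, x = wordElt R u}) ≃*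
            PresentedGroup (relsOf R')) := by
  have hnormal := sigmaOnePred_closure_eq_normalClosure.comp ((Primrec.const R).pair Primrec.id)
  have hiso := sigmaOnePred_nonempty_mulEquiv.comp
    ((Primrec.list_append.comp (Primrec.const R) Primrec.id).pair (Primrec.const R'))
  refine ((hnormal.and hiso).of_iff fun X => and_congr_right' ?_).rePred
  rw [setOf_wordElt_eq_image, relsOf_append]
  let e := PresentedGroup.quotientMulEquivUnion (relsOf R) (relsOf X)
  exact ⟨fun ⟨f⟩ => ⟨e.trans f⟩, fun ⟨f⟩ => ⟨e.symm.trans f⟩⟩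
end
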